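/- Fix τ > 0 and define the kernel q^τ(x,y) = (1/τ)(x+τ−y)·1_{[x,x+τ]}(y). The induced integral operator T^τ f(x) = ∫₀^∞ q^τ(x,y) f'(y) dy is an everywhere-defined bounded linear operator on H_w; more precisely, for every f ∈ H_w, (T^τ f)'(x) = (f(x+τ)−f(x))/τ − f'(x) and ∫₀^∞ w(x) ((T^τ f)'(x)+f'(x))² dx ≤ ∫₀^∞ w(y) f'(y)² dy, so ‖T^τ f‖_w ≤ ‖T^τ f + f‖_w + ‖f‖_w < ∞. -/

import Mathlib

open MeasureTheory Set Filter

noncomputable section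

/-- Inner product on the Filipović space `H_w`, for functions `g, h` with chosen
(weak) derivatives `g', h'`:  `⟨g,h⟩_w = g(0)h(0) + ∫₀^∞ w g' h'`. -/
def wInner (w g g' h h' : ℝ → ℝ) : ℝ :=
  g 0 * h 0 + ∫ x in Ioi (0:ℝ), w x * g' x * h' x

/-- Norm on the Filipović space `H_w`. -/
def wNorm (w g g' : ℝ → ℝ) : ℝ := Real.sqrt (wInner w g g' g g')

/-- `w : ℝ≥0 → [1,∞)` continuous, increasing, with `w 0 = 1`. -/
structure IsWeight (w : ℝ → ℝ) : Prop where
  cont : ContinuousOn w (Ici 0)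
  mono : MonotoneOn w (Ici 0)
  one_le : ∀ x ∈ Ici (0:ℝ), 1 ≤ w x
  at_zero : w 0 = 1

/-- `g ∈ H_w` with derivative `g'`: `g` is absolutely continuous on `[0,∞)` with
a.e. derivative `g'`, and `∫₀^∞ w (g')² < ∞`. -/
def MemHw (w g g' : ℝ → ℝ) : Prop :=
  (∀ x ∈ Ici (0:ℝ), g x = g 0 + ∫ t in Ioc (0:ℝ) x, g' t) ∧
  (∀ x ∈ Ici (0:ℝ), IntegrableOn g' (Ioc 0 x)) ∧
  IntegrableOn (fun x => w x * g' x ^ 2) (Ioi 0)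

/-- The reproducing kernel `h_x(y) = 1 + ∫₀^{min(x,y)} 1/w(s) ds`. -/
def hker (w : ℝ → ℝ) (x y : ℝ) : ℝ := 1 + ∫ s in Ioc (0:ℝ) (min x y), 1 / w s

/-- Derivative of `h_x`. -/
def hker' (w : ℝ → ℝ) (x : ℝ) : ℝ → ℝ := (Iic x).indicator (fun s => 1 / w s)

/-- The delivery-period kernel `q^τ(x,y) = (1/τ)(x+τ−y)·1_{[x,x+τ]}(y)`. -/
def qtau (τ x y : ℝ) : ℝ :=
  (1 / τ) * (x + τ - y) * (Icc x (x + τ)).indicator (fun _ => (1:ℝ)) y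

/-!
For `x ≥ 0` the kernel integral equals `(1/τ) ∫_x^{x+τ} f - f x` (Fubini on the triangle
`x < y ≤ z ≤ x + τ`), so its derivative is the slope `(f (x+τ) - f x)/τ` minus `f'`. Jensen on
`[x, x+τ]` and monotonicity of `w` give `w x · slope² ≤ (1/τ) ∫_x^{x+τ} w f'²`; integrating in `x`
and exchanging the integrals, each `t` is covered by windows `(x, x+τ]` of total length `τ`,
whence `∫ w slope² ≤ ∫ w f'²`. The norm inequality is the triangle inequality for the norm of
`g ↦ (g 0, √w · g')` in `ℝ × L²(0, ∞)`.
-/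

open scoped ENNReal Topology

theorem MemLp.norm_toLp_two_sq {α : Type*} [MeasurableSpace α] {μ : Measure α} {u : α → ℝ}
    (hu : MemLp u 2 μ) : ‖hu.toLp u‖ ^ 2 = ∫ a, u a ^ 2 ∂μ := by
  rw [← real_inner_self_eq_norm_sq, L2.inner_def]
  refine integral_congr_ae ?_
  filter_upwards [hu.coeFn_toLp] with a ha
  simp [ha, sq]

theorem sqrt_sub_sq_add_integral_le {α : Type*} [MeasurableSpace α] {μ : Measure α}
    {u v : α → ℝ} (hu : MemLp u 2 μ) (hv : MemLp v 2 μ) (a b : ℝ) :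
    √((a - b) ^ 2 + ∫ x, (u x - v x) ^ 2 ∂μ) ≤
      √(a ^ 2 + ∫ x, u x ^ 2 ∂μ) + √(b ^ 2 + ∫ x, v x ^ 2 ∂μ) := by
  have hnorm : ∀ (c : ℝ) (U : α →₂[μ] ℝ),
      ‖(WithLp.toLp 2 (c, U) : WithLp 2 (ℝ × (α →₂[μ] ℝ)))‖ = √(c ^ 2 + ‖U‖ ^ 2) := by
    intro c U
    simp [WithLp.prod_norm_eq_of_L2]
  have := norm_sub_le (WithLp.toLp 2 (a, hu.toLp u) : WithLp 2 (ℝ × (α →₂[μ] ℝ)))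
    (WithLp.toLp 2 (b, hv.toLp v))
  rwa [← WithLp.toLp_sub, Prod.mk_sub_mk, ← MemLp.toLp_sub, hnorm, hnorm, hnorm,
    MemLp.norm_toLp_two_sq, MemLp.norm_toLp_two_sq, MemLp.norm_toLp_two_sq] at this

theorem integral_Ioc_sub_mul_eq_integral_primitive {g : ℝ → ℝ} {a b : ℝ}
    (hg : IntegrableOn g (Ioc a b)) :
    ∫ y in Ioc a b, (b - y) * g y = ∫ z in Ioc a b, ∫ y in Ioc a z, g y := by
  set ν := volume.restrict (Ioc a b)
  have : IsFiniteMeasure ν := isFiniteMeasure_restrict.2 measure_Ioc_lt_top.ne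
  have hS : MeasurableSet {p : ℝ × ℝ | p.2 ≤ p.1} := measurableSet_le measurable_snd measurable_fst
  have hF : Integrable (Function.uncurry fun z y => (Iic z).indicator g y) (ν.prod ν) :=
    (hg.comp_snd ν).indicator hS
  have hinner : ∀ z ∈ Ioc a b, ∫ y in Ioc a z, g y = ∫ y, (Iic z).indicator g y ∂ν := by
    intro z hz
    rw [integral_indicator measurableSet_Iic, Measure.restrict_restrict measurableSet_Iic,
      Iic_inter_Ioc_of_le hz.2]
  have houter : ∀ y ∈ Ioc a b, (b - y) * g y = ∫ z, (Iic z).indicator g y ∂ν := by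
    intro y hy
    have hslice : (fun z => (Iic z).indicator g y) = (Ici y).indicator fun _ => g y := by
      ext z; by_cases h : y ≤ z <;> simp [h]
    have hset : Ici y ∩ Ioc a b = Icc y b := by
      ext z
      simp only [mem_inter_iff, mem_Ici, mem_Ioc, mem_Icc]
      exact ⟨fun h => ⟨h.1, h.2.2⟩, fun h => ⟨h.1, hy.1.trans_le h.1, h.2⟩⟩
    rw [hslice, integral_indicator_const _ measurableSet_Ici,
      measureReal_restrict_apply measurableSet_Ici, hset, Real.volume_real_Icc_of_le hy.2,
      smul_eq_mul]
  rw [setIntegral_congr_fun measurableSet_Ioc houter,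
    setIntegral_congr_fun measurableSet_Ioc hinner]
  exact (integral_integral_swap hF).symm

theorem lintegral_lintegral_Ioc_add {φ : ℝ → ℝ≥0∞} (hφ : AEMeasurable φ) (τ : ℝ) :
    ∫⁻ x, ∫⁻ t in Ioc x (x + τ), φ t = ENNReal.ofReal τ * ∫⁻ t, φ t := by
  have hS : MeasurableSet {p : ℝ × ℝ | p.1 < p.2 ∧ p.2 ≤ p.1 + τ} :=
    (measurableSet_lt measurable_fst measurable_snd).inter
      (measurableSet_le measurable_snd (measurable_fst.add_const τ))
  have hK : AEMeasurable (Function.uncurry fun x t => (Ioc x (x + τ)).indicator φ t)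
      (volume.prod volume) :=
    (hφ.comp_quasiMeasurePreserving Measure.quasiMeasurePreserving_snd).indicator hS
  have hslice : ∀ t, (fun x => (Ioc x (x + τ)).indicator φ t) =
      (Ico (t - τ) t).indicator fun _ => φ t := by
    intro t
    ext x
    by_cases h : t ∈ Ioc x (x + τ)
    · rw [indicator_of_mem h, indicator_of_mem (mem_Ico.2 ⟨by linarith [h.2], h.1⟩)]
    · rw [indicator_of_notMem h, indicator_of_notMem]
      exact fun h' => h ⟨h'.2, by linarith [h'.1]⟩
  simp_rw [← lintegral_indicator measurableSet_Ioc]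
  rw [lintegral_lintegral_swap hK, ← lintegral_const_mul' _ _ ENNReal.ofReal_ne_top]
  refine lintegral_congr fun t => ?_
  rw [hslice, lintegral_indicator_const measurableSet_Ico, Real.volume_Ico, sub_sub_cancel,
    mul_comm]

theorem integrableOn_Ioi_and_integral_le_of_le_window_average {φ ψ : ℝ → ℝ} {τ : ℝ}
    (hτ : 0 < τ) (hφ : IntegrableOn φ (Ioi 0)) (hφ0 : ∀ t ∈ Ioi (0:ℝ), 0 ≤ φ t)
    (hψm : AEStronglyMeasurable ψ (volume.restrict (Ioi 0))) (hψ0 : ∀ x ∈ Ioi (0:ℝ), 0 ≤ ψ x)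
    (hψφ : ∀ x ∈ Ioi (0:ℝ), ψ x ≤ (1 / τ) * ∫ t in Ioc x (x + τ), φ t) :
    IntegrableOn ψ (Ioi 0) ∧ ∫ x in Ioi 0, ψ x ≤ ∫ t in Ioi 0, φ t := by
  set Φ : ℝ → ℝ≥0∞ := (Ioi 0).indicator fun t => ENNReal.ofReal (φ t)
  have hΦ : AEMeasurable Φ :=
    (aemeasurable_indicator_iff measurableSet_Ioi).2 hφ.aemeasurable.ennreal_ofReal
  have hφ0' : 0 ≤ᵐ[volume.restrict (Ioi 0)] φ := ae_restrict_of_forall_mem measurableSet_Ioi hφ0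
  have hψ0' : 0 ≤ᵐ[volume.restrict (Ioi 0)] ψ := ae_restrict_of_forall_mem measurableSet_Ioi hψ0
  have hwindow : ∀ x ∈ Ioi (0:ℝ),
      ENNReal.ofReal (ψ x) ≤ ENNReal.ofReal (1 / τ) * ∫⁻ t in Ioc x (x + τ), Φ t := by
    intro x hx
    have hsub : Ioc x (x + τ) ⊆ Ioi 0 := fun t ht => lt_trans hx ht.1
    rw [setLIntegral_congr_fun measurableSet_Ioc fun t ht => indicator_of_mem (hsub ht) _,
      ← ofReal_integral_eq_lintegral_ofReal (hφ.mono_set hsub)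
        (ae_restrict_of_forall_mem measurableSet_Ioc fun t ht => hφ0 t (hsub ht)),
      ← ENNReal.ofReal_mul (by positivity)]
    exact ENNReal.ofReal_le_ofReal (hψφ x hx)
  have hlint : ∫⁻ x in Ioi 0, ENNReal.ofReal (ψ x) ≤ ENNReal.ofReal (∫ t in Ioi 0, φ t) :=
    calc ∫⁻ x in Ioi 0, ENNReal.ofReal (ψ x)
        ≤ ∫⁻ x in Ioi 0, ENNReal.ofReal (1 / τ) * ∫⁻ t in Ioc x (x + τ), Φ t :=
          setLIntegral_mono' measurableSet_Ioi hwindow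
      _ ≤ ∫⁻ x, ENNReal.ofReal (1 / τ) * ∫⁻ t in Ioc x (x + τ), Φ t :=
          setLIntegral_le_lintegral _ _
      _ = ∫⁻ t, Φ t := by
          rw [lintegral_const_mul' _ _ ENNReal.ofReal_ne_top, lintegral_lintegral_Ioc_add hΦ,
            ← mul_assoc, ← ENNReal.ofReal_mul (by positivity), one_div_mul_cancel hτ.ne',
            ENNReal.ofReal_one, one_mul]
      _ = ENNReal.ofReal (∫ t in Ioi 0, φ t) := by
          rw [lintegral_indicator measurableSet_Ioi, ofReal_integral_eq_lintegral_ofReal hφ hφ0']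
  have hψ : IntegrableOn ψ (Ioi 0) :=
    ⟨hψm, (hasFiniteIntegral_iff_ofReal hψ0').2 (hlint.trans_lt ENNReal.ofReal_lt_top)⟩
  refine ⟨hψ, ?_⟩
  rw [integral_eq_lintegral_of_nonneg_ae hψ0' hψm]
  exact ENNReal.toReal_le_of_le_ofReal (setIntegral_nonneg measurableSet_Ioi hφ0) hlint

section WeightedNorm

variable {w g' : ℝ → ℝ}

theorem sq_sqrt_mul_eq (hw : ∀ x ∈ Ioi (0:ℝ), 0 ≤ w x) :
    (fun x => (√(w x) * g' x) ^ 2) =ᵐ[volume.restrict (Ioi 0)] fun x => w x * g' x ^ 2 := by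
  filter_upwards [ae_restrict_mem measurableSet_Ioi] with x hx
  rw [mul_pow, Real.sq_sqrt (hw x hx)]

theorem memLp_sqrt_mul (hw : ∀ x ∈ Ioi (0:ℝ), 0 ≤ w x)
    (hwm : AEStronglyMeasurable w (volume.restrict (Ioi 0)))
    (hg'm : AEStronglyMeasurable g' (volume.restrict (Ioi 0)))
    (hg' : IntegrableOn (fun x => w x * g' x ^ 2) (Ioi 0)) :
    MemLp (fun x => √(w x) * g' x) 2 (volume.restrict (Ioi 0)) :=
  (memLp_two_iff_integrable_sq ((Real.continuous_sqrt.comp_aestronglyMeasurable hwm).mul hg'm)).2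
    (hg'.congr (sq_sqrt_mul_eq hw).symm)

theorem wNorm_sub_le {g h h' : ℝ → ℝ} (hw : ∀ x ∈ Ioi (0:ℝ), 0 ≤ w x)
    (hwm : AEStronglyMeasurable w (volume.restrict (Ioi 0)))
    (hg'm : AEStronglyMeasurable g' (volume.restrict (Ioi 0)))
    (hh'm : AEStronglyMeasurable h' (volume.restrict (Ioi 0)))
    (hg' : IntegrableOn (fun x => w x * g' x ^ 2) (Ioi 0))
    (hh' : IntegrableOn (fun x => w x * h' x ^ 2) (Ioi 0)) :
    wNorm w (fun x => g x - h x) (fun x => g' x - h' x) ≤ wNorm w g g' + wNorm w h h' := by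
  have hL2 : ∀ k' : ℝ → ℝ,
      ∫ x in Ioi 0, w x * k' x * k' x = ∫ x in Ioi 0, (√(w x) * k' x) ^ 2 :=
    fun k' => integral_congr_ae ((sq_sqrt_mul_eq hw).mono fun x hx => by rw [hx]; ring)
  have key := sqrt_sub_sq_add_integral_le (memLp_sqrt_mul hw hwm hg'm hg')
    (memLp_sqrt_mul hw hwm hh'm hh') (g 0) (h 0)
  simp only [wNorm, wInner, hL2, ← sq]
  simpa only [← mul_sub] using key

end WeightedNorm

theorem integral_qtau_mul (g : ℝ → ℝ) {τ x : ℝ} (hx : 0 ≤ x) :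
    ∫ y in Ioi 0, qtau τ x y * g y = (1 / τ) * ∫ y in Ioc x (x + τ), (x + τ - y) * g y := by
  have hset : (Ioi 0 ∩ Icc x (x + τ) : Set ℝ) =ᵐ[volume] Ioc x (x + τ) := by
    have hIci : Ici 0 ∩ Icc x (x + τ) = Icc x (x + τ) :=
      inter_eq_right.2 fun y hy => hx.trans hy.1
    refine (Ioi_ae_eq_Ici.inter (ae_eq_refl _)).trans ?_
    rw [hIci]
    exact Ioc_ae_eq_Icc.symm
  have hq : (fun y => qtau τ x y * g y) =
      (Icc x (x + τ)).indicator fun y => (1 / τ) * ((x + τ - y) * g y) := by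
    ext y
    by_cases hy : y ∈ Icc x (x + τ) <;> simp [qtau, hy, mul_assoc]
  rw [hq, setIntegral_indicator measurableSet_Icc, setIntegral_congr_set hset, integral_const_mul]

namespace IsWeight

variable {w : ℝ → ℝ}

theorem nonneg (hw : IsWeight w) : ∀ x ∈ Ioi (0:ℝ), 0 ≤ w x :=
  fun x hx => zero_le_one.trans (hw.one_le x (Ioi_subset_Ici_self hx))

theorem aestronglyMeasurable (hw : IsWeight w) :
    AEStronglyMeasurable w (volume.restrict (Ioi 0)) :=
  (hw.cont.mono Ioi_subset_Ici_self).aestronglyMeasurable measurableSet_Ioi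

end IsWeight

namespace MemHw

variable {w f f' : ℝ → ℝ} {τ : ℝ}

theorem integrableOn_Ioc (hf : MemHw w f f') {a b : ℝ} (ha : 0 ≤ a) :
    IntegrableOn f' (Ioc a b) := by
  rcases le_total a b with hab | hba
  · exact (hf.2.1 b (ha.trans hab)).mono_set (Ioc_subset_Ioc_left ha)
  · simp [Ioc_eq_empty_of_le hba]

theorem integral_Ioc_eq_sub (hf : MemHw w f f') {a b : ℝ} (ha : 0 ≤ a) (hab : a ≤ b) :
    ∫ t in Ioc a b, f' t = f b - f a := by
  have hsplit := setIntegral_union (Ioc_disjoint_Ioc_of_le le_rfl) measurableSet_Ioc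
    (hf.integrableOn_Ioc le_rfl (b := a)) (hf.integrableOn_Ioc ha (b := b))
  rw [Ioc_union_Ioc_eq_Ioc ha hab] at hsplit
  rw [hf.1 a ha, hf.1 b (ha.trans hab), hsplit]
  ring

theorem aestronglyMeasurable (hf : MemHw w f f') :
    AEStronglyMeasurable f' (volume.restrict (Ioi 0)) := by
  have hIoi : Ioi (0:ℝ) = ⋃ n : ℕ, Ioc 0 (n : ℝ) :=
    (iUnion_Ioc_eq_Ioi_self_iff.2 fun x _ => exists_nat_ge x).symm
  rw [hIoi, aestronglyMeasurable_iUnion_iff]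
  exact fun n => (hf.integrableOn_Ioc le_rfl).aestronglyMeasurable

theorem continuousOn (hf : MemHw w f f') : ContinuousOn f (Ici 0) := by
  intro x hx
  have hx1 : x < x + 1 := lt_add_one x
  have hprim : ContinuousOn (fun y => f 0 + ∫ t in Ioc 0 y, f' t) (Icc 0 (x + 1)) :=
    continuousOn_const.add (intervalIntegral.continuousOn_primitive
      ((integrableOn_Icc_iff_integrableOn_Ioc).2 (hf.integrableOn_Ioc le_rfl)))
  have hnhds : Icc 0 (x + 1) ∈ 𝓝[Ici 0] x := by
    rw [← Ici_inter_Iic]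
    exact inter_mem_nhdsWithin _ (Iic_mem_nhds hx1)
  exact ((hprim.continuousWithinAt ⟨hx, hx1.le⟩).mono_of_mem_nhdsWithin hnhds).congr
    (fun y hy => hf.1 y hy) (hf.1 x hx)

theorem intervalIntegrable (hf : MemHw w f f') {a b : ℝ} (ha : 0 ≤ a) (hb : 0 ≤ b) :
    IntervalIntegrable f volume a b :=
  (hf.continuousOn.mono fun _ ht => le_trans (le_min ha hb) ht.1).intervalIntegrable

theorem continuousOn_slope (hf : MemHw w f f') (hτ : 0 ≤ τ) :
    ContinuousOn (fun x => (f (x + τ) - f x) / τ) (Ici 0) := by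
  have hshift : ContinuousOn (fun x => f (x + τ)) (Ici 0) :=
    hf.continuousOn.comp (continuous_add_const τ).continuousOn fun x hx =>
      add_nonneg (mem_Ici.1 hx) hτ
  exact (hshift.sub hf.continuousOn).div_const τ

theorem aestronglyMeasurable_slope (hf : MemHw w f f') (hτ : 0 ≤ τ) :
    AEStronglyMeasurable (fun x => (f (x + τ) - f x) / τ) (volume.restrict (Ioi 0)) :=
  ((hf.continuousOn_slope hτ).mono Ioi_subset_Ici_self).aestronglyMeasurable measurableSet_Ioi

theorem integral_slope (hf : MemHw w f f') (hτ : 0 ≤ τ) {x : ℝ} (hx : 0 ≤ x) :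
    ∫ t in Ioc 0 x, (f (t + τ) - f t) / τ =
      ((∫ z in Ioc x (x + τ), f z) - ∫ z in Ioc 0 τ, f z) / τ := by
  have hxτ : 0 ≤ x + τ := add_nonneg hx hτ
  have hshift : IntervalIntegrable (fun t => f (t + τ)) volume 0 x := by
    simpa using (hf.intervalIntegrable hτ hxτ).comp_add_right τ
  rw [← intervalIntegral.integral_of_le hx, intervalIntegral.integral_div,
    intervalIntegral.integral_sub hshift (hf.intervalIntegrable le_rfl hx),
    intervalIntegral.integral_comp_add_right, zero_add,
    intervalIntegral.integral_interval_sub_interval_comm' (hf.intervalIntegrable hτ hxτ)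
      (hf.intervalIntegrable le_rfl hx) (hf.intervalIntegrable hτ le_rfl),
    intervalIntegral.integral_of_le (by linarith), intervalIntegral.integral_of_le hτ]

theorem integral_qtau_mul (hf : MemHw w f f') (hτ : 0 < τ) {x : ℝ} (hx : 0 ≤ x) :
    ∫ y in Ioi 0, qtau τ x y * f' y = (1 / τ) * (∫ z in Ioc x (x + τ), f z) - f x := by
  rw [_root_.integral_qtau_mul f' hx,
    integral_Ioc_sub_mul_eq_integral_primitive (hf.integrableOn_Ioc hx),
    setIntegral_congr_fun measurableSet_Ioc fun z hz => hf.integral_Ioc_eq_sub hx hz.1.le,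
    integral_sub (hf.intervalIntegrable hx (by linarith)).1
      (integrableOn_const measure_Ioc_lt_top.ne),
    setIntegral_const, Real.volume_real_Ioc_of_le (by linarith), smul_eq_mul]
  field_simp
  ring

theorem mul_sq_slope_le (hw : IsWeight w) (hf : MemHw w f f') (hτ : 0 < τ) {x : ℝ}
    (hx : 0 ≤ x) :
    w x * ((f (x + τ) - f x) / τ) ^ 2 ≤ (1 / τ) * ∫ t in Ioc x (x + τ), w t * f' t ^ 2 := by
  set I := Ioc x (x + τ)
  have hIpos : I ⊆ Ioi 0 := fun t ht => hx.trans_lt ht.1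
  have hvol : volume.real I = τ := by
    rw [Real.volume_real_Ioc_of_le (by linarith)]
    ring
  have hf'I : IntegrableOn f' I := hf.integrableOn_Ioc hx
  have hwf'I : IntegrableOn (fun t => w t * f' t ^ 2) I := hf.2.2.mono_set hIpos
  have hf'sqI : IntegrableOn (fun t => f' t ^ 2) I := by
    refine hwf'I.mono' (hf'I.aestronglyMeasurable.pow 2)
      (ae_restrict_of_forall_mem measurableSet_Ioc fun t ht => ?_)
    rw [Real.norm_of_nonneg (sq_nonneg _)]
    exact le_mul_of_one_le_left (sq_nonneg _) (hw.one_le t (Ioi_subset_Ici_self (hIpos ht)))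
  have hjensen : ((f (x + τ) - f x) / τ) ^ 2 ≤ (1 / τ) * ∫ t in I, f' t ^ 2 := by
    have := (even_two.convexOn_pow (𝕜 := ℝ)).map_set_average_le (continuous_pow 2).continuousOn
      isClosed_univ (by simp [hτ]) measure_Ioc_lt_top.ne (ae_of_all _ fun _ => mem_univ _)
      hf'I hf'sqI
    rwa [setAverage_eq, setAverage_eq, hf.integral_Ioc_eq_sub hx (by linarith), hvol,
      smul_eq_mul, smul_eq_mul, inv_mul_eq_div, ← one_div] at this
  calc w x * ((f (x + τ) - f x) / τ) ^ 2 ≤ w x * ((1 / τ) * ∫ t in I, f' t ^ 2) :=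
        mul_le_mul_of_nonneg_left hjensen (zero_le_one.trans (hw.one_le x hx))
    _ = (1 / τ) * ∫ t in I, w x * f' t ^ 2 := by rw [integral_const_mul]; ring
    _ ≤ (1 / τ) * ∫ t in I, w t * f' t ^ 2 := by
        refine mul_le_mul_of_nonneg_left (setIntegral_mono_on (hf'sqI.const_mul _) hwf'I
          measurableSet_Ioc fun t ht => ?_) (by positivity)
        exact mul_le_mul_of_nonneg_right (hw.mono hx (Ioi_subset_Ici_self (hIpos ht)) ht.1.le)
          (sq_nonneg _)

theorem integrableOn_mul_sq_slope_and_integral_le (hw : IsWeight w) (hf : MemHw w f f')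
    (hτ : 0 < τ) :
    IntegrableOn (fun x => w x * ((f (x + τ) - f x) / τ) ^ 2) (Ioi 0) ∧
      ∫ x in Ioi 0, w x * ((f (x + τ) - f x) / τ) ^ 2 ≤ ∫ t in Ioi 0, w t * f' t ^ 2 :=
  integrableOn_Ioi_and_integral_le_of_le_window_average hτ hf.2.2
    (fun t ht => mul_nonneg (hw.nonneg t ht) (sq_nonneg _))
    (hw.aestronglyMeasurable.mul ((hf.aestronglyMeasurable_slope hτ.le).pow 2))
    (fun x hx => mul_nonneg (hw.nonneg x hx) (sq_nonneg _))
    (fun _ hx => hf.mul_sq_slope_le hw hτ (le_of_lt hx))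

theorem memHw_integral_qtau_mul (hw : IsWeight w) (hf : MemHw w f f') (hτ : 0 < τ) :
    MemHw w (fun x => ∫ y in Ioi 0, qtau τ x y * f' y)
      (fun x => (f (x + τ) - f x) / τ - f' x) := by
  have hslope : ∀ x, IntegrableOn (fun t => (f (t + τ) - f t) / τ) (Ioc 0 x) := fun x =>
    ((hf.continuousOn_slope hτ.le).mono Icc_subset_Ici_self).integrableOn_Icc.mono_set
      Ioc_subset_Icc_self
  refine ⟨fun x hx => ?_, fun x _ => (hslope x).sub (hf.integrableOn_Ioc le_rfl), ?_⟩
  · beta_reduce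
    rw [integral_sub (hslope x) (hf.integrableOn_Ioc le_rfl), hf.integral_slope hτ.le hx,
      hf.integral_Ioc_eq_sub le_rfl hx, hf.integral_qtau_mul hτ hx,
      hf.integral_qtau_mul hτ le_rfl, zero_add]
    ring
  · have hL2 := (memLp_sqrt_mul hw.nonneg hw.aestronglyMeasurable
      (hf.aestronglyMeasurable_slope hτ.le)
      (hf.integrableOn_mul_sq_slope_and_integral_le hw hτ).1).sub
      (memLp_sqrt_mul hw.nonneg hw.aestronglyMeasurable hf.aestronglyMeasurable hf.2.2)
    refine hL2.integrable_sq.congr ?_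
    filter_upwards [sq_sqrt_mul_eq (g' := fun x => (f (x + τ) - f x) / τ - f' x) hw.nonneg]
      with x hx
    rw [← hx, Pi.sub_apply, ← mul_sub]

end MemHw

/-- the integral operator `T^τ` with kernel `q^τ` is everywhere
defined on `H_w`, with `(T^τ f)'(x) = (f(x+τ)−f(x))/τ − f'(x)`,
`∫₀^∞ w ((T^τf)' + f')² ≤ ∫₀^∞ w (f')²`, and
`‖T^τ f‖_w ≤ ‖T^τ f + f‖_w + ‖f‖_w`. -/
theorem stmt13 (w : ℝ → ℝ) (hw : IsWeight w) (τ : ℝ) (hτ : 0 < τ) :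
    ∀ f f' : ℝ → ℝ, MemHw w f f' →
      MemHw w (fun x => ∫ y in Ioi (0:ℝ), qtau τ x y * f' y)
        (fun x => (f (x + τ) - f x) / τ - f' x) ∧
      (∫ x in Ioi (0:ℝ), w x * (((f (x + τ) - f x) / τ - f' x) + f' x) ^ 2) ≤
        (∫ y in Ioi (0:ℝ), w y * f' y ^ 2) ∧
      wNorm w (fun x => ∫ y in Ioi (0:ℝ), qtau τ x y * f' y)
          (fun x => (f (x + τ) - f x) / τ - f' x) ≤
        wNorm w (fun x => (∫ y in Ioi (0:ℝ), qtau τ x y * f' y) + f x)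
            (fun x => (f (x + τ) - f x) / τ) + wNorm w f f' := by
  intro f f' hf
  obtain ⟨hslope, hslope_le⟩ := hf.integrableOn_mul_sq_slope_and_integral_le hw hτ
  refine ⟨hf.memHw_integral_qtau_mul hw hτ, by simpa only [sub_add_cancel] using hslope_le, ?_⟩
  simpa only [add_sub_cancel_right] using
    wNorm_sub_le (g := fun x => (∫ y in Ioi (0:ℝ), qtau τ x y * f' y) + f x) (h := f) hw.nonneg
      hw.aestronglyMeasurable (hf.aestronglyMeasurable_slope hτ.le) hf.aestronglyMeasurable
      hslope hf.2.2
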